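/- Let K be a field, m ≥ 2 an integer, G a finite simple graph on [n] and v an internal vertex of G. Then the generalized binomial edge ideal decomposes as J_{K_m,G} = J_{K_m,G_v} ∩ (P_v + J_{K_m,G∖v}), an equality of ideals of S = K[x_{ij} : i ∈ [m], j ∈ [n]]. -/

import Mathlib

/-- A maximal clique of a simple graph: a clique that is maximal under inclusion. -/
def MaxClq {V : Type*} (G : SimpleGraph V) (s : Set V) : Prop :=
  G.IsClique s ∧ ∀ t : Set V, G.IsClique t → s ⊆ t → s = t

/-- An internal vertex: a vertex lying in at least two (distinct) maximal cliques. -/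
def InternalVtx {V : Type*} (G : SimpleGraph V) (v : V) : Prop :=
  ∃ s t : Set V, MaxClq G s ∧ MaxClq G t ∧ s ≠ t ∧ v ∈ s ∧ v ∈ t

/-- `iv G`: the number of internal vertices of `G`. -/
noncomputable def ivNum {V : Type*} (G : SimpleGraph V) : ℕ :=
  {v : V | InternalVtx G v}.ncard

/-- `c G`: the number of connected components of `G`. -/
noncomputable def compNum {V : Type*} (G : SimpleGraph V) : ℕ :=
  Nat.card G.ConnectedComponent

/-- `𝒞 G`: the number of maximal cliques of `G`. -/
noncomputable def maxClqNum {V : Type*} (G : SimpleGraph V) : ℕ :=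
  {s : Set V | MaxClq G s}.ncard

/-- `ω G`: the clique number of `G`, the maximum size of a clique. -/
noncomputable def clqNum {V : Type*} (G : SimpleGraph V) : ℕ :=
  sSup {k : ℕ | ∃ s : Set V, G.IsClique s ∧ s.ncard = k}

/-- A set of edges of `G` is clique-disjoint if no two distinct edges of it are both
contained in a single clique of `G`. -/
def CliqueDisjointEdges {V : Type*} (G : SimpleGraph V) (E : Set (Sym2 V)) : Prop :=
  E ⊆ G.edgeSet ∧ ∀ e ∈ E, ∀ f ∈ E, e ≠ f →
    ¬ ∃ s : Set V, G.IsClique s ∧ (∀ x ∈ e, x ∈ s) ∧ (∀ x ∈ f, x ∈ s)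

/-- `η G`: the maximum cardinality of a clique-disjoint set of edges of `G`. -/
noncomputable def etaNum {V : Type*} (G : SimpleGraph V) : ℕ :=
  sSup {k : ℕ | ∃ E : Set (Sym2 V), CliqueDisjointEdges G E ∧ E.ncard = k}

/-- `G_v`: the graph on the same vertex set as `G` whose edges are those of `G` together
with all edges between distinct neighbours of `v`. -/
def addNbrEdges {V : Type*} (G : SimpleGraph V) (v : V) : SimpleGraph V where
  Adj a b := G.Adj a b ∨ (a ≠ b ∧ G.Adj v a ∧ G.Adj v b)
  symm := by
    constructor
    intro a b h
    rcases h with h | ⟨hne, h1, h2⟩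
    · exact Or.inl h.symm
    · exact Or.inr ⟨hne.symm, h2, h1⟩
  loopless := by
    constructor
    intro a h
    rcases h with h | ⟨hne, _, _⟩
    · exact G.loopless.irrefl a h
    · exact hne rfl

/-- The graph `G ∖ v`: the vertex `v` is isolated and the remaining edges are exactly
those of the induced subgraph of `G` on the complement of `v`, so that the binomial
edge ideal generators of `G ∖ v` are exactly those coming from edges of `G` avoiding `v`. -/
def delVtx {V : Type*} (G : SimpleGraph V) (v : V) : SimpleGraph V where
  Adj a b := G.Adj a b ∧ a ≠ v ∧ b ≠ v
  symm := by
    constructor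
    rintro a b ⟨h, ha, hb⟩
    exact ⟨h.symm, hb, ha⟩
  loopless := by
    constructor
    rintro a ⟨h, _, _⟩
    exact G.loopless.irrefl a h

open MvPolynomial in
/-- The generalized binomial edge ideal `J_{K_m, G}` of a graph `G` on `[n]`, inside
`S = K[x_{ij} : i ∈ [m], j ∈ [n]]`: it is generated by the `2`-minors
`x_{ik} x_{jl} − x_{il} x_{jk}` for `1 ≤ i < j ≤ m` and `{k, l} ∈ E(G)`. -/
noncomputable def genBEI (K : Type*) [Field K] (m n : ℕ) (G : SimpleGraph (Fin n)) :
    Ideal (MvPolynomial (Fin m × Fin n) K) :=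
  Ideal.span {f | ∃ (i j : Fin m) (k l : Fin n), i < j ∧ G.Adj k l ∧
    f = X (i, k) * X (j, l) - X (i, l) * X (j, k)}

open MvPolynomial in
/-- `P_v = (x_{1v}, …, x_{mv})`. -/
noncomputable def Pvert (K : Type*) [Field K] (m n : ℕ) (v : Fin n) :
    Ideal (MvPolynomial (Fin m × Fin n) K) :=
  Ideal.span (Set.range fun i : Fin m => X (i, v))

/-!
Let `φ` be the substitution `x_{cv} ↦ 0`. It kills `P_v` and fixes the generators of
`J_{K_m,G∖v}`, so `φ` maps `P_v + J_{K_m,G∖v}` into `J_{K_m,G}`. Conversely, for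
`f ∈ J_{K_m,G_v}` one has `f - φ f ∈ J_{K_m,G}`: this is clear on generators, since
the new edges avoid `v`, and it survives multiplication by `a` because
`a f - φ(a f) = a (f - φ f) + (a - φ a) φ f` with `a - φ a ∈ P_v` and `P_v · φ f ⊆ J_{K_m,G}`.
The last inclusion, for a minor on two neighbours `u, w` of `v`, is a three-term
Plücker-type relation between the columns `u, v, w`.
Hence an `f` in the intersection is `(f - φ f) + φ f ∈ J_{K_m,G}`.
-/

open MvPolynomial

namespace GenBEI

variable {K : Type*} [Field K] {m n : ℕ}

variable (K) in
noncomputable def minor (i j : Fin m) (k l : Fin n) : MvPolynomial (Fin m × Fin n) K :=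
  X (i, k) * X (j, l) - X (i, l) * X (j, k)

lemma minor_mem_genBEI {G : SimpleGraph (Fin n)} {k l : Fin n} (h : G.Adj k l) (i j : Fin m) :
    minor K i j k l ∈ genBEI K m n G := by
  rcases lt_trichotomy i j with hij | rfl | hij
  · exact Ideal.subset_span ⟨i, j, k, l, hij, h, rfl⟩
  · simp [minor, mul_comm]
  · have hswap : minor K i j k l = minor K j i l k := by simp only [minor]; ring
    exact hswap ▸ Ideal.subset_span ⟨j, i, l, k, hij, h.symm, rfl⟩

lemma genBEI_mono {G H : SimpleGraph (Fin n)} (h : G ≤ H) :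
    genBEI K m n G ≤ genBEI K m n H :=
  Ideal.span_mono fun _ ⟨i, j, k, l, hij, hkl, hf⟩ => ⟨i, j, k, l, hij, h hkl, hf⟩

lemma X_mul_minor_mem_genBEI {G : SimpleGraph (Fin n)} {v u w : Fin n} (hu : G.Adj v u)
    (hw : G.Adj v w) (c i j : Fin m) :
    X (c, v) * minor K i j u w ∈ genBEI K m n G := by
  have key : X (c, v) * minor K i j u w =
      X (c, u) * minor K i j v w + X (j, w) * minor K i c u v - X (i, w) * minor K j c u v := by
    simp only [minor]; ring
  rw [key]
  exact sub_mem (add_mem (Ideal.mul_mem_left _ _ (minor_mem_genBEI hw i j))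
    (Ideal.mul_mem_left _ _ (minor_mem_genBEI hu.symm i c)))
    (Ideal.mul_mem_left _ _ (minor_mem_genBEI hu.symm j c))

lemma le_addNbrEdges (G : SimpleGraph (Fin n)) (v : Fin n) : G ≤ addNbrEdges G v :=
  fun _ _ h => Or.inl h

lemma addNbrEdges_adj_of_incident {G : SimpleGraph (Fin n)} {v k l : Fin n}
    (h : (addNbrEdges G v).Adj k l) (hv : k = v ∨ l = v) : G.Adj k l := by
  rcases h with h | ⟨-, hk, hl⟩
  · exact h
  · rcases hv with rfl | rfl
    · exact absurd hk (G.loopless.irrefl k)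
    · exact absurd hl (G.loopless.irrefl l)

variable (K m) in
noncomputable def killColumn (v : Fin n) :
    MvPolynomial (Fin m × Fin n) K →ₐ[K] MvPolynomial (Fin m × Fin n) K :=
  aeval fun p => if p.2 = v then 0 else X p

lemma killColumn_X (v : Fin n) (p : Fin m × Fin n) :
    killColumn K m v (X p) = if p.2 = v then 0 else X p := by
  simp [killColumn]

lemma killColumn_minor (v : Fin n) (i j : Fin m) (k l : Fin n) :
    killColumn K m v (minor K i j k l) = if k = v ∨ l = v then 0 else minor K i j k l := by
  by_cases hk : k = v <;> by_cases hl : l = v <;>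
    simp [minor, killColumn_X, hk, hl]

lemma sub_killColumn_mem_Pvert (v : Fin n) (p : MvPolynomial (Fin m × Fin n) K) :
    p - killColumn K m v p ∈ Pvert K m n v := by
  induction p using MvPolynomial.induction_on with
  | C a => simp [killColumn]
  | add p q hp hq =>
    rw [map_add, add_sub_add_comm]
    exact add_mem hp hq
  | mul_X p s hp =>
    obtain ⟨c, k⟩ := s
    rw [map_mul, killColumn_X]
    by_cases hk : k = v
    · subst hk
      have hX : (X (c, k) : MvPolynomial (Fin m × Fin n) K) ∈ Pvert K m n k :=
        Ideal.subset_span ⟨c, rfl⟩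
      simpa using Ideal.mul_mem_left _ p hX
    · simpa [hk, ← sub_mul] using Ideal.mul_mem_right _ _ hp

lemma minor_mem_Pvert {v k l : Fin n} (hv : k = v ∨ l = v) (i j : Fin m) :
    minor K i j k l ∈ Pvert K m n v := by
  simpa [killColumn_minor, hv] using sub_killColumn_mem_Pvert (K := K) v (minor K i j k l)

lemma genBEI_le_Pvert_add_genBEI_delVtx (G : SimpleGraph (Fin n)) (v : Fin n) :
    genBEI K m n G ≤ Pvert K m n v + genBEI K m n (delVtx G v) := by
  refine Ideal.span_le.mpr ?_
  rintro _ ⟨i, j, k, l, hij, hkl, rfl⟩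
  by_cases hv : k = v ∨ l = v
  · exact Ideal.mem_sup_left (minor_mem_Pvert hv i j)
  · exact Ideal.mem_sup_right (Ideal.subset_span ⟨i, j, k, l, hij, ⟨hkl, not_or.mp hv⟩, rfl⟩)

lemma Pvert_add_genBEI_delVtx_le_comap (G : SimpleGraph (Fin n)) (v : Fin n) :
    Pvert K m n v + genBEI K m n (delVtx G v) ≤
      (genBEI K m n G).comap (killColumn K m v) := by
  refine sup_le ?_ (Ideal.span_le.mpr ?_)
  · rw [Pvert, Ideal.span_le]
    rintro _ ⟨c, rfl⟩
    simp [killColumn_X]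
  · rintro _ ⟨i, j, k, l, -, ⟨hkl, hk, hl⟩, rfl⟩
    change killColumn K m v (minor K i j k l) ∈ genBEI K m n G
    simpa [killColumn_minor, hk, hl] using minor_mem_genBEI hkl i j

lemma mem_colon_Pvert_iff {J : Ideal (MvPolynomial (Fin m × Fin n) K)} {v : Fin n}
    {g : MvPolynomial (Fin m × Fin n) K} :
    g ∈ J.colon (Pvert K m n v : Set _) ↔ ∀ c, X (c, v) * g ∈ J := by
  simp [Pvert, Submodule.mem_colon, mul_comm]

lemma killColumn_mem_colon_Pvert {G : SimpleGraph (Fin n)} {v : Fin n}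
    {f : MvPolynomial (Fin m × Fin n) K} (hf : f ∈ genBEI K m n (addNbrEdges G v)) :
    killColumn K m v f ∈ (genBEI K m n G).colon (Pvert K m n v : Set _) := by
  suffices genBEI K m n (addNbrEdges G v) ≤
      ((genBEI K m n G).colon (Pvert K m n v : Set _)).comap (killColumn K m v) from this hf
  refine Ideal.span_le.mpr ?_
  rintro _ ⟨i, j, k, l, -, hkl, rfl⟩
  change killColumn K m v (minor K i j k l) ∈ (genBEI K m n G).colon (Pvert K m n v : Set _)
  rw [killColumn_minor]
  split_ifs with hv
  · exact zero_mem _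
  · refine mem_colon_Pvert_iff.mpr fun c => ?_
    rcases hkl with h | ⟨-, hk, hl⟩
    · exact Ideal.mul_mem_left _ _ (minor_mem_genBEI h i j)
    · exact X_mul_minor_mem_genBEI hk hl c i j

lemma sub_killColumn_mem_genBEI {G : SimpleGraph (Fin n)} {v : Fin n}
    {f : MvPolynomial (Fin m × Fin n) K} (hf : f ∈ genBEI K m n (addNbrEdges G v)) :
    f - killColumn K m v f ∈ genBEI K m n G := by
  induction hf using Submodule.span_induction with
  | mem _ hg =>
    obtain ⟨i, j, k, l, -, hkl, rfl⟩ := hg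
    change minor K i j k l - killColumn K m v (minor K i j k l) ∈ _
    rw [killColumn_minor]
    split_ifs with hv
    · simpa using minor_mem_genBEI (addNbrEdges_adj_of_incident hkl hv) i j
    · simp
  | zero => simp
  | add x y _ _ hx hy =>
    rw [map_add, add_sub_add_comm]
    exact add_mem hx hy
  | smul a x hx ihx =>
    have split : a • x - killColumn K m v (a • x) =
        a * (x - killColumn K m v x) + killColumn K m v x * (a - killColumn K m v a) := by
      rw [smul_eq_mul, map_mul]; ring
    rw [split]
    exact add_mem (Ideal.mul_mem_left _ _ ihx)
      (Submodule.mem_colon.mp (killColumn_mem_colon_Pvert hx) _ (sub_killColumn_mem_Pvert v a))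

end GenBEI

open GenBEI in
theorem stmt1_general (K : Type*) [Field K] (m n : ℕ) (G : SimpleGraph (Fin n))
    (v : Fin n) :
    genBEI K m n G =
      genBEI K m n (addNbrEdges G v) ⊓
        (Pvert K m n v + genBEI K m n (delVtx G v)) := by
  refine le_antisymm
    (le_inf (genBEI_mono (le_addNbrEdges G v)) (genBEI_le_Pvert_add_genBEI_delVtx G v)) ?_
  rintro f ⟨hfv, hfQ⟩
  have hφf : killColumn K m v f ∈ genBEI K m n G :=
    Pvert_add_genBEI_delVtx_le_comap G v hfQ
  simpa using add_mem (sub_killColumn_mem_genBEI hfv) hφf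

/-- if `m ≥ 2` and `v` is an internal vertex of `G`, then
`J_{K_m,G} = J_{K_m,G_v} ∩ (P_v + J_{K_m,G∖v})` as ideals of
`S = K[x_{ij} : i ∈ [m], j ∈ [n]]`. -/
theorem stmt1 (K : Type*) [Field K] (m n : ℕ) (hm : 2 ≤ m) (G : SimpleGraph (Fin n))
    (v : Fin n) (hv : InternalVtx G v) :
    genBEI K m n G =
      genBEI K m n (addNbrEdges G v) ⊓
        (Pvert K m n v + genBEI K m n (delVtx G v)) :=
  stmt1_general K m n G v
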